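/- Let s ≥ 2, h = (1,2) and g = (1,3,…,4s−1)(2,4,…,4s) in Sym(4s), G = ⟨h,g⟩, and M = ⟨h, h^g, …, h^{g^{2s−1}}⟩. Then M ≅ C₂^{2s} is normal in G, G/M is cyclic of order 2s generated by gM, and |G| = 2^{2s}·2s. -/

import Mathlib

/-!
Split the points into the `2s` blocks `{2i, 2i+1}`. The conjugate `g^i h g^{-i}` is the
transposition of block `i`, and these transpositions generate the group of block-preserving
permutations, which is `C₂^{2s}` through the flips `blockFlip`. Both `h` and `g` rotate the
blocks as a whole (by `0` and by `1` in `ZMod (2s)`), so every element of `G` does; the rotation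
amount is a homomorphism `G → C_{2s}` sending `g` to a generator, and its kernel consists of the
block-preserving elements of `G`, namely `M`. Normality of `M` and `|G| = |M| · 2s` follow.
-/

open Equiv

namespace PairBlocks

variable {s : ℕ}

lemma closure_range_ofAdd_single_one {ι : Type*} [Fintype ι] [DecidableEq ι] (n : ℕ) :
    Subgroup.closure (Set.range fun i : ι => Multiplicative.ofAdd (Pi.single i (1 : ZMod n))) =
      ⊤ := by
  refine Subgroup.eq_top_iff' _ |>.2 fun v => ?_
  have hv : v = ∏ i : ι, .ofAdd (Pi.single i (1 : ZMod n)) ^ ((v.toAdd i).cast : ℤ) := by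
    apply Multiplicative.toAdd.injective
    simp only [toAdd_prod, toAdd_zpow, toAdd_ofAdd, ← Pi.single_smul', zsmul_eq_mul, mul_one,
      ZMod.intCast_zmod_cast]
    exact (Finset.univ_sum_single _).symm
  rw [hv]
  exact Subgroup.prod_mem _ fun i _ => zpow_mem (Subgroup.subset_closure (Set.mem_range_self i)) _

lemma zpowers_ofAdd_one (n : ℕ) : Subgroup.zpowers (Multiplicative.ofAdd (1 : ZMod n)) = ⊤ := by
  refine Subgroup.eq_top_iff' _ |>.2 fun y => ⟨y.toAdd.cast, ?_⟩
  apply Multiplicative.toAdd.injective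
  simp

def block (x : Fin (4 * s)) : Fin (2 * s) := ⟨x / 2, by omega⟩

def blockCoord (x : Fin (4 * s)) : ZMod (2 * s) := (block x : ℕ)

lemma block_eq_iff_blockCoord_eq {x y : Fin (4 * s)} :
    block x = block y ↔ blockCoord x = blockCoord y := by
  rw [blockCoord, blockCoord, ZMod.natCast_eq_natCast_iff', Nat.mod_eq_of_lt (block x).isLt,
    Nat.mod_eq_of_lt (block y).isLt, Fin.val_inj]

section Flip

def blockFlipFun (v : Fin (2 * s) → ZMod 2) (x : Fin (4 * s)) : Fin (4 * s) :=
  ⟨2 * (x / 2) + (x % 2 + (v (block x)).val) % 2, by omega⟩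

lemma block_blockFlipFun (v : Fin (2 * s) → ZMod 2) (x : Fin (4 * s)) :
    block (blockFlipFun v x) = block x :=
  Fin.ext (by simp only [block, blockFlipFun]; omega)

lemma blockFlipFun_involutive (v : Fin (2 * s) → ZMod 2) :
    Function.Involutive (blockFlipFun v) := fun x => by
  have := (v (block x)).val_lt
  ext
  show (blockFlipFun v (blockFlipFun v x) : ℕ) = x
  rw [blockFlipFun, Fin.val_mk, block_blockFlipFun, blockFlipFun, Fin.val_mk]
  omega

/-- The permutation exchanging the two points `2 i, 2 i + 1` of every block `i` with `v i = 1`. -/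
def blockFlip (v : Fin (2 * s) → ZMod 2) : Perm (Fin (4 * s)) :=
  (blockFlipFun_involutive v).toPerm

lemma blockFlip_apply_val (v : Fin (2 * s) → ZMod 2) (x : Fin (4 * s)) :
    (blockFlip v x : ℕ) = 2 * (x / 2) + (x % 2 + (v (block x)).val) % 2 := rfl

lemma block_blockFlip (v : Fin (2 * s) → ZMod 2) (x : Fin (4 * s)) :
    block (blockFlip v x) = block x :=
  block_blockFlipFun v x

lemma blockFlip_add (v w : Fin (2 * s) → ZMod 2) :
    blockFlip (v + w) = blockFlip v * blockFlip w := by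
  ext x
  have := (v (block x)).val_lt
  have := (w (block x)).val_lt
  rw [Perm.mul_apply, blockFlip_apply_val, blockFlip_apply_val, block_blockFlip,
    blockFlip_apply_val, Pi.add_apply, ZMod.val_add]
  omega

def blockFlipHom : Multiplicative (Fin (2 * s) → ZMod 2) →* Perm (Fin (4 * s)) :=
  MonoidHom.mk' (fun v => blockFlip v.toAdd) fun v w => blockFlip_add v.toAdd w.toAdd

lemma blockFlipHom_injective : Function.Injective (blockFlipHom (s := s)) := by
  intro v w hvw
  ext j
  have hj := j.isLt
  have key := congrArg (fun σ : Perm (Fin (4 * s)) => (σ ⟨2 * j, by omega⟩ : ℕ)) hvw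
  have hb : block (⟨2 * j, by omega⟩ : Fin (4 * s)) = j := Fin.ext (by simp [block])
  simp only [blockFlipHom, MonoidHom.mk'_apply, blockFlip_apply_val, hb] at key
  have := (v.toAdd j).val_lt
  have := (w.toAdd j).val_lt
  exact ZMod.val_injective _ (by omega)

lemma blockFlip_single_one (i : Fin (2 * s)) :
    blockFlip (Pi.single i 1) = swap ⟨2 * i, by omega⟩ ⟨2 * i + 1, by omega⟩ := by
  ext x
  have hx := x.isLt
  rw [blockFlip_apply_val, swap_apply_def]
  by_cases hxi : block x = i
  · have hxi' : (x : ℕ) / 2 = i := congrArg Fin.val hxi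
    rw [hxi, Pi.single_eq_same, ZMod.val_one]
    split_ifs with h0 h1 <;> simp only [Fin.ext_iff] at * <;> omega
  · have hxi' : (x : ℕ) / 2 ≠ i := fun h => hxi (Fin.ext h)
    rw [Pi.single_eq_of_ne hxi, ZMod.val_zero]
    split_ifs with h0 h1 <;> simp only [Fin.ext_iff] at * <;> omega

/-- A block-preserving permutation is the flip recording where it sends the even point of each
block. -/
lemma mem_range_blockFlipHom_iff (σ : Perm (Fin (4 * s))) :
    σ ∈ (blockFlipHom (s := s)).range ↔ ∀ x, block (σ x) = block x := by
  constructor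
  · rintro ⟨v, rfl⟩ x
    exact block_blockFlip v.toAdd x
  · intro hσ
    refine ⟨Multiplicative.ofAdd fun j => ((σ ⟨2 * j, by omega⟩ : ℕ) : ZMod 2), ?_⟩
    ext x
    have hx := x.isLt
    have he := congrArg Fin.val (hσ ⟨2 * (x / 2), by omega⟩)
    have ho := congrArg Fin.val (hσ ⟨2 * (x / 2) + 1, by omega⟩)
    have heo : (σ ⟨2 * (x / 2), by omega⟩ : ℕ) ≠ σ ⟨2 * (x / 2) + 1, by omega⟩ :=
      Fin.val_ne_of_ne (σ.injective.ne (by simp [Fin.ext_iff]))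
    simp only [block] at he ho
    simp only [blockFlipHom, MonoidHom.mk'_apply, toAdd_ofAdd, blockFlip_apply_val,
      ZMod.val_natCast, block]
    rcases Nat.mod_two_eq_zero_or_one x with hpar | hpar
    · have hxe : σ x = σ ⟨2 * (x / 2), by omega⟩ :=
        congrArg σ (Fin.ext (by simp; omega))
      rw [hxe]
      omega
    · have hxo : σ x = σ ⟨2 * (x / 2) + 1, by omega⟩ :=
        congrArg σ (Fin.ext (by simp; omega))
      rw [hxo]
      omega

lemma closure_range_blockFlip_single :
    Subgroup.closure (Set.range fun i : Fin (2 * s) => blockFlip (Pi.single i 1)) =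
      (blockFlipHom (s := s)).range := by
  rw [MonoidHom.range_eq_map, ← closure_range_ofAdd_single_one, MonoidHom.map_closure,
    ← Set.range_comp]
  rfl

lemma card_range_blockFlipHom : Nat.card (blockFlipHom (s := s)).range = 2 ^ (2 * s) := by
  rw [← Nat.card_congr (MonoidHom.ofInjective blockFlipHom_injective).toEquiv,
    Nat.card_congr Multiplicative.toAdd, Nat.card_fun, Nat.card_zmod, Nat.card_eq_fintype_card,
    Fintype.card_fin]

end Flip

def blockRotations : Subgroup (Perm (Fin (4 * s))) where
  carrier := {σ | ∃ k : ZMod (2 * s), ∀ x, blockCoord (σ x) = blockCoord x + k}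
  one_mem' := ⟨0, by simp⟩
  mul_mem' := by
    rintro σ τ ⟨k, hk⟩ ⟨l, hl⟩
    exact ⟨l + k, fun x => by rw [Perm.mul_apply, hk, hl, add_assoc]⟩
  inv_mem' := by
    rintro σ ⟨k, hk⟩
    refine ⟨-k, fun x => ?_⟩
    rw [← sub_eq_add_neg, eq_sub_iff_add_eq, ← hk, ← Perm.mul_apply, mul_inv_cancel,
      Perm.one_apply]

lemma range_blockFlipHom_le_blockRotations : (blockFlipHom (s := s)).range ≤ blockRotations :=
  fun σ hσ => ⟨0, fun x => by
    rw [add_zero, ← block_eq_iff_blockCoord_eq, (mem_range_blockFlipHom_iff σ).1 hσ]⟩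

lemma conj_mem_range_blockFlipHom {r σ : Perm (Fin (4 * s))} (hr : r ∈ blockRotations)
    (hσ : σ ∈ (blockFlipHom (s := s)).range) :
    r * σ * r⁻¹ ∈ (blockFlipHom (s := s)).range := by
  obtain ⟨k, hk⟩ := hr
  rw [mem_range_blockFlipHom_iff] at hσ ⊢
  intro x
  have hx := hk (r⁻¹ x)
  rw [← Perm.mul_apply, mul_inv_cancel, Perm.one_apply] at hx
  rw [block_eq_iff_blockCoord_eq, Perm.mul_apply, Perm.mul_apply, hk, hx,
    block_eq_iff_blockCoord_eq.1 (hσ _)]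

section Shift

variable [NeZero s]

lemma blockCoord_zero : blockCoord (0 : Fin (4 * s)) = 0 := by
  simp [blockCoord, block]

def blockShift : blockRotations (s := s) →* Multiplicative (ZMod (2 * s)) :=
  MonoidHom.mk' (fun σ => .ofAdd (blockCoord (σ.1 0))) <| by
    rintro ⟨σ, k, hk⟩ ⟨τ, l, hl⟩
    simp only [Subgroup.coe_mul, Perm.mul_apply, hk, hl, blockCoord_zero, ← ofAdd_add]
    ring_nf

lemma blockCoord_apply_of_mem_blockRotations (σ : blockRotations (s := s)) (x : Fin (4 * s)) :
    blockCoord (σ.1 x) = blockCoord x + (blockShift σ).toAdd := by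
  obtain ⟨σ, k, hk⟩ := σ
  simp [blockShift, hk, blockCoord_zero]

lemma blockShift_eq_one_iff (σ : blockRotations (s := s)) :
    blockShift σ = 1 ↔ σ.1 ∈ (blockFlipHom (s := s)).range := by
  simp only [mem_range_blockFlipHom_iff, block_eq_iff_blockCoord_eq,
    blockCoord_apply_of_mem_blockRotations, add_eq_left, toAdd_eq_zero]
  exact ⟨fun h _ => h, fun h => h 0⟩

end Shift

lemma ite_eq_add_two_mod {s i : ℕ} (hi : i < 4 * s) :
    (if i % 2 = 0 then (if i = 4 * s - 2 then 0 else i + 2)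
      else (if i = 4 * s - 1 then 1 else i + 2)) = (i + 2) % (4 * s) := by
  rcases lt_or_ge (i + 2) (4 * s) with h | h
  · rw [Nat.mod_eq_of_lt h]
    split_ifs <;> omega
  · rw [Nat.mod_eq_sub_mod h, Nat.mod_eq_of_lt (show i + 2 - 4 * s < 4 * s by omega)]
    split_ifs <;> omega

section Rotation

variable {g : Perm (Fin (4 * s))} (hg : ∀ x, (g x : ℕ) = (x + 2) % (4 * s))
include hg

lemma pow_apply_val_of_add_two (n : ℕ) (x : Fin (4 * s)) :
    ((g ^ n) x : ℕ) = (x + 2 * n) % (4 * s) := by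
  induction n with
  | zero => simp [Nat.mod_eq_of_lt x.isLt]
  | succ n ih => rw [pow_succ', Perm.mul_apply, hg, ih, Nat.mod_add_mod]; ring_nf

lemma blockCoord_pow_apply_of_add_two (n : ℕ) (x : Fin (4 * s)) :
    blockCoord ((g ^ n) x) = blockCoord x + n := by
  have hdiv : ((g ^ n) x : ℕ) / 2 = (x / 2 + n) % (2 * s) := by
    have := Nat.mod_mul_right_div_self (x + 2 * n) 2 (2 * s)
    rwa [← Nat.mul_assoc, show (x + 2 * n) / 2 = x / 2 + n by omega,
      ← pow_apply_val_of_add_two hg] at this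
  simp only [blockCoord, block, hdiv, ZMod.natCast_mod, Nat.cast_add]

lemma pow_mul_swap_mul_inv_of_add_two (i : Fin (2 * s)) (h0 : 0 < 4 * s) (h1 : 1 < 4 * s) :
    g ^ (i : ℕ) * swap ⟨0, h0⟩ ⟨1, h1⟩ * (g ^ (i : ℕ))⁻¹ =
      blockFlip (Pi.single i 1) := by
  have hi := i.isLt
  rw [← swap_apply_apply, blockFlip_single_one]
  congr 1 <;> ext <;> rw [pow_apply_val_of_add_two hg] <;> simp only <;>
    rw [Nat.mod_eq_of_lt (by omega)] <;> ring

lemma mem_blockRotations_of_add_two : g ∈ blockRotations :=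
  ⟨1, fun x => by simpa using blockCoord_pow_apply_of_add_two hg 1 x⟩

lemma blockShift_of_add_two [NeZero s] :
    blockShift ⟨g, mem_blockRotations_of_add_two hg⟩ = .ofAdd 1 := by
  show Multiplicative.ofAdd (blockCoord (g 0)) = _
  simpa [blockCoord_zero] using blockCoord_pow_apply_of_add_two hg 1 0

end Rotation

end PairBlocks

open PairBlocks

/-- Points `0,…,4s−1` stand for `1,…,4s`; since Mathlib composes permutations right-to-left,
the paper's `h^{g^i} = g^{-i} h g^i` is `g^i * h * (g^i)⁻¹`. -/
theorem stmt8 (s : ℕ) (hs : 2 ≤ s)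
    (h g : Equiv.Perm (Fin (4 * s)))
    (hh : h = Equiv.swap ⟨0, by omega⟩ ⟨1, by omega⟩)
    (hg : ∀ i : Fin (4 * s), (g i : ℕ) =
      if (i : ℕ) % 2 = 0 then (if (i : ℕ) = 4 * s - 2 then 0 else (i : ℕ) + 2)
      else (if (i : ℕ) = 4 * s - 1 then 1 else (i : ℕ) + 2)) :
    Nonempty
      (↥(Subgroup.closure {x : Equiv.Perm (Fin (4 * s)) |
          ∃ i : Fin (2 * s), x = g ^ (i : ℕ) * h * (g ^ (i : ℕ))⁻¹}) ≃*
        Multiplicative (Fin (2 * s) → ZMod 2)) ∧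
    Subgroup.closure {x : Equiv.Perm (Fin (4 * s)) |
        ∃ i : Fin (2 * s), x = g ^ (i : ℕ) * h * (g ^ (i : ℕ))⁻¹} ≤
      Subgroup.closure {h, g} ∧
    (∀ r ∈ Subgroup.closure ({h, g} : Set (Equiv.Perm (Fin (4 * s)))),
      ∀ x ∈ Subgroup.closure {x : Equiv.Perm (Fin (4 * s)) |
          ∃ i : Fin (2 * s), x = g ^ (i : ℕ) * h * (g ^ (i : ℕ))⁻¹},
        r * x * r⁻¹ ∈ Subgroup.closure {x : Equiv.Perm (Fin (4 * s)) |
          ∃ i : Fin (2 * s), x = g ^ (i : ℕ) * h * (g ^ (i : ℕ))⁻¹}) ∧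
    (∃ φ : ↥(Subgroup.closure ({h, g} : Set (Equiv.Perm (Fin (4 * s))))) →*
        Multiplicative (ZMod (2 * s)),
      Function.Surjective φ ∧
      φ.ker = (Subgroup.closure {x : Equiv.Perm (Fin (4 * s)) |
          ∃ i : Fin (2 * s), x = g ^ (i : ℕ) * h * (g ^ (i : ℕ))⁻¹}).subgroupOf
        (Subgroup.closure {h, g}) ∧
      Subgroup.zpowers (φ ⟨g, Subgroup.subset_closure (by simp)⟩) = ⊤) ∧
    Nat.card ↥(Subgroup.closure ({h, g} : Set (Equiv.Perm (Fin (4 * s))))) =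
      2 ^ (2 * s) * (2 * s) := by
  have : NeZero s := ⟨by omega⟩
  have hg₂ (x : Fin (4 * s)) : (g x : ℕ) = (x + 2) % (4 * s) :=
    (hg x).trans (ite_eq_add_two_mod x.isLt)
  set M := Subgroup.closure {x | ∃ i : Fin (2 * s), x = g ^ (i : ℕ) * h * (g ^ (i : ℕ))⁻¹}
  set G := Subgroup.closure {h, g}
  have hM : M = blockFlipHom.range := by
    simp only [M, ← closure_range_blockFlip_single, hh, pow_mul_swap_mul_inv_of_add_two hg₂,
      Set.range, eq_comm]
  have hgG : g ∈ G := Subgroup.subset_closure (by simp)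
  have hMG : M ≤ G := Subgroup.closure_le _ |>.2 fun _ ⟨i, hi⟩ => hi ▸
    mul_mem (mul_mem (pow_mem hgG _) (Subgroup.subset_closure (by simp))) (inv_mem (pow_mem hgG _))
  have hG : G ≤ blockRotations := by
    have hhM : h ∈ M := Subgroup.subset_closure ⟨0, by simp⟩
    refine Subgroup.closure_le _ |>.2 <| Set.insert_subset ?_ <| Set.singleton_subset_iff.2 <|
      mem_blockRotations_of_add_two hg₂
    exact range_blockFlipHom_le_blockRotations (hM ▸ hhM)
  set φ : G →* Multiplicative (ZMod (2 * s)) := blockShift.comp (Subgroup.inclusion hG)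
  have hφg : φ ⟨g, hgG⟩ = .ofAdd 1 := blockShift_of_add_two hg₂
  have hzpowers : Subgroup.zpowers (φ ⟨g, hgG⟩) = ⊤ := hφg ▸ zpowers_ofAdd_one _
  have hsurj : Function.Surjective φ := MonoidHom.range_eq_top.1 <| top_le_iff.1 <|
    hzpowers ▸ (Subgroup.zpowers_le.2 ⟨_, rfl⟩)
  have hker : φ.ker = M.subgroupOf G := by
    ext σ
    rw [MonoidHom.mem_ker, Subgroup.mem_subgroupOf, hM]
    exact blockShift_eq_one_iff _
  refine ⟨⟨(MulEquiv.subgroupCongr hM).trans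
      (MonoidHom.ofInjective blockFlipHom_injective).symm⟩, hMG,
    fun r hr x hx => hM ▸ conj_mem_range_blockFlipHom (hG hr) (hM ▸ hx),
    ⟨φ, hsurj, hker, hzpowers⟩, ?_⟩
  rw [← Subgroup.card_mul_index φ.ker, Subgroup.index_ker, MonoidHom.range_eq_top.2 hsurj, hker,
    Nat.card_congr (Subgroup.subgroupOfEquivOfLe hMG).toEquiv, hM, card_range_blockFlipHom,
    Subgroup.card_top, Nat.card_congr Multiplicative.toAdd, Nat.card_zmod]
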